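/- If there is a temporal beer path from x to y within time interval [t_α, t_ω], then there exists a fastest temporal beer path from x to y within [t_α, t_ω] traversing some active beer vertex b at a time t ∈ T_b, such that both the subpath from x to b and the subpath from b to y are non-dominated temporal paths. -/

import Mathlib

open scoped Classical

structure TEdge (V : Type) where
  src : V
  dst : V
  t : ℝ
  len : ℝ

variable {V : Type}

/-- Consecutive compatibility of temporal edges. -/
def compat (e f : TEdge V) : Prop := e.dst = f.src ∧ e.t + e.len ≤ f.t

/-- A temporal path from `x` to `y`: a nonempty list of temporal edges of `E`,
starting at `x`, ending at `y`, consecutively compatible. -/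
def IsPath (E : Set (TEdge V)) (x y : V) (p : List (TEdge V)) : Prop :=
  p ≠ [] ∧ (∀ e ∈ p, e ∈ E) ∧ p.head?.map TEdge.src = some x ∧
    p.getLast?.map TEdge.dst = some y ∧ List.Chain' compat p

/-- Starting time of a temporal path. -/
def startT (p : List (TEdge V)) : ℝ := ((p.head?).map TEdge.t).getD 0

/-- Ending (arrival) time of a temporal path. -/
def endT (p : List (TEdge V)) : ℝ := ((p.getLast?).map (fun e => e.t + e.len)).getD 0

/-- Distance (sum of traversal times) of a temporal path. -/
def distT (p : List (TEdge V)) : ℝ := (p.map TEdge.len).sum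

/-- `p = q ++ r` witnesses a visit of beer vertex `b` at time `t`:
`b` is the endpoint of `q` (or the source `x` if `q` is empty), `t` is no
earlier than the arrival of the last edge of `q` and no later than the
departure of the first edge of `r`. -/
def BeerSplit (x b : V) (t : ℝ) (p q r : List (TEdge V)) : Prop :=
  p = q ++ r ∧ ((q.getLast?).map TEdge.dst).getD x = b ∧
    (∀ e ∈ q.getLast?, e.t + e.len ≤ t) ∧ (∀ e ∈ r.head?, t ≤ e.t)

/-- A temporal beer path from `x` to `y`: a temporal path visiting some active
beer vertex `b ∈ B` at some time `t ∈ T b` between the arrival at `b` and the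
departure from `b`. -/
def IsBeerPath (E : Set (TEdge V)) (B : Set V) (T : V → Set ℝ) (x y : V)
    (p : List (TEdge V)) : Prop :=
  IsPath E x y p ∧ ∃ b ∈ B, ∃ t ∈ T b, ∃ q r, BeerSplit x b t p q r

/-- The path `p` starts no earlier than `tα` and ends no later than `tω`. -/
def InWin (tα tω : ℝ) (p : List (TEdge V)) : Prop :=
  tα ≤ startT p ∧ endT p ≤ tω

/-- `p` is a non-dominated temporal `x`-`y` path: no temporal `x`-`y` path
starts no earlier and ends no later, with one inequality strict. -/
def NonDom (E : Set (TEdge V)) (x y : V) (p : List (TEdge V)) : Prop :=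
  IsPath E x y p ∧
  ¬ ∃ p', IsPath E x y p' ∧ startT p ≤ startT p' ∧ endT p' ≤ endT p ∧
      (startT p < startT p' ∨ endT p' < endT p)

/-! Durations of paths whose edges lie in the finite set `E` take finitely many values, so a
fastest beer path exists. Split it at its beer visit and replace each half by a path of least
duration among those starting no earlier and ending no later than that half; such a path is
non-dominated, because a path dominating it would be strictly faster yet still admissible. The new
halves still fit together around the same beer visit, and the resulting beer path starts no
earlier and ends no later, so it is still fastest. -/

lemma startT_cons (e : TEdge V) (l : List (TEdge V)) : startT (e :: l) = e.t := rfl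

lemma endT_of_ne_nil {p : List (TEdge V)} (h : p ≠ []) :
    endT p = (p.getLast h).t + (p.getLast h).len := by
  simp [endT, List.getLast?_eq_some_getLast h]

lemma startT_append_of_ne_nil {q : List (TEdge V)} (r : List (TEdge V)) (hq : q ≠ []) :
    startT (q ++ r) = startT q := by
  obtain ⟨e, l, rfl⟩ := List.exists_cons_of_ne_nil hq
  rfl

lemma endT_append_of_ne_nil (q : List (TEdge V)) {r : List (TEdge V)} (hr : r ≠ []) :
    endT (q ++ r) = endT r := by
  rw [endT_of_ne_nil hr, endT_of_ne_nil (by simp [hr]), List.getLast_append_right hr]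

lemma forall_mem_getLast?_le_iff {q : List (TEdge V)} {t : ℝ} :
    (∀ e ∈ q.getLast?, e.t + e.len ≤ t) ↔ (q ≠ [] → endT q ≤ t) := by
  rcases eq_or_ne q [] with rfl | hq
  · simp
  · simp [List.getLast?_eq_some_getLast hq, endT_of_ne_nil hq, hq]

lemma forall_mem_head?_le_iff {r : List (TEdge V)} {t : ℝ} :
    (∀ e ∈ r.head?, t ≤ e.t) ↔ (r ≠ [] → t ≤ startT r) := by
  cases r <;> simp [startT_cons]

lemma startT_append_le_startT_append {q q' r r' : List (TEdge V)} (hq : q' = [] ↔ q = [])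
    (hqs : startT q ≤ startT q') (hrs : startT r ≤ startT r') :
    startT (q ++ r) ≤ startT (q' ++ r') := by
  rcases eq_or_ne q [] with rfl | hq0
  · simpa [hq.2 rfl] using hrs
  · rwa [startT_append_of_ne_nil _ hq0, startT_append_of_ne_nil _ (mt hq.1 hq0)]

lemma endT_append_le_endT_append {q q' r r' : List (TEdge V)} (hr : r' = [] ↔ r = [])
    (hqe : endT q' ≤ endT q) (hre : endT r' ≤ endT r) :
    endT (q' ++ r') ≤ endT (q ++ r) := by
  rcases eq_or_ne r [] with rfl | hr0
  · simpa [hr.2 rfl] using hqe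
  · rwa [endT_append_of_ne_nil _ hr0, endT_append_of_ne_nil _ (mt hr.1 hr0)]

section Fastest

variable {E : Set (TEdge V)}

lemma finite_image_duration (hE : E.Finite) :
    ((fun p => endT p - startT p) '' {p | p ≠ [] ∧ ∀ e ∈ p, e ∈ E}).Finite := by
  refine ((hE.image fun e => e.t + e.len).image2 (· - ·) (hE.image TEdge.t)).subset ?_
  rintro _ ⟨p, ⟨hne, hmem⟩, rfl⟩
  obtain ⟨e, l, rfl⟩ := List.exists_cons_of_ne_nil hne
  exact Set.mem_image2_of_mem ⟨_, hmem _ (List.getLast_mem hne), (endT_of_ne_nil hne).symm⟩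
    ⟨e, hmem e List.mem_cons_self, rfl⟩

lemma exists_forall_duration_le (hE : E.Finite) {S : Set (List (TEdge V))}
    (hS : S ⊆ {p | p ≠ [] ∧ ∀ e ∈ p, e ∈ E}) (hne : S.Nonempty) :
    ∃ p ∈ S, ∀ p' ∈ S, endT p - startT p ≤ endT p' - startT p' := by
  obtain ⟨p, hp, hmin⟩ := Set.Finite.exists_minimalFor' _ S
    ((finite_image_duration hE).subset (Set.image_mono hS)) hne
  exact ⟨p, hp, fun p' hp' => (le_total _ _).elim (hmin hp') id⟩

end Fastest

section Paths

variable {E : Set (TEdge V)} {u v x y b : V} {q r : List (TEdge V)}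

lemma IsPath.append (hq : IsPath E x b q) (hr : IsPath E b y r) (h : endT q ≤ startT r) :
    IsPath E x y (q ++ r) := by
  obtain ⟨hq0, hqE, hqx, hqb, hqc⟩ := hq
  obtain ⟨hr0, hrE, hrb, hry, hrc⟩ := hr
  obtain ⟨f, l, rfl⟩ := List.exists_cons_of_ne_nil hr0
  rw [List.getLast?_eq_some_getLast hq0, Option.map_some, Option.some_inj] at hqb
  rw [endT_of_ne_nil hq0, startT_cons] at h
  simp only [List.head?_cons, Option.map_some, Option.some_inj] at hrb
  refine ⟨by simp, ?_, ?_, ?_, List.isChain_append.2 ⟨hqc, hrc, ?_⟩⟩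
  · simpa [or_imp, forall_and] using And.intro hqE hrE
  · rwa [List.head?_append_of_ne_nil _ hq0]
  · rwa [List.getLast?_append_of_ne_nil _ hr0]
  · simpa [List.getLast?_eq_some_getLast hq0, compat] using And.intro (hqb.trans hrb.symm) h

lemma IsPath.left_of_append (h : IsPath E x y (q ++ r)) (hq : q ≠ []) :
    IsPath E x (q.getLast hq).dst q := by
  obtain ⟨-, hE, hx, -, hc⟩ := h
  refine ⟨hq, fun e he => hE e (List.mem_append_left _ he), ?_, ?_, (List.isChain_append.1 hc).1⟩
  · rwa [List.head?_append_of_ne_nil _ hq] at hx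
  · simp [List.getLast?_eq_some_getLast hq]

lemma IsPath.right_of_append (h : IsPath E x y (q ++ r)) (hq : q ≠ []) (hr : r ≠ []) :
    IsPath E (q.getLast hq).dst y r := by
  obtain ⟨-, hE, -, hy, hc⟩ := h
  obtain ⟨-, hrc, hjoin⟩ := List.isChain_append.1 hc
  obtain ⟨f, l, rfl⟩ := List.exists_cons_of_ne_nil hr
  refine ⟨hr, fun e he => hE e (List.mem_append_right _ he), ?_, ?_, hrc⟩
  · simp [(hjoin _ (List.getLast?_eq_some_getLast hq) f rfl).1]
  · rwa [List.getLast?_append_of_ne_nil _ hr] at hy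

def IsSegment (E : Set (TEdge V)) (u v : V) (q : List (TEdge V)) : Prop :=
  q = [] ∧ u = v ∨ IsPath E u v q

lemma IsSegment.getD_getLast?_dst (h : IsSegment E u v q) :
    ((q.getLast?).map TEdge.dst).getD u = v := by
  rcases h with ⟨rfl, rfl⟩ | ⟨-, -, -, hv, -⟩
  · rfl
  · rw [hv]; rfl

lemma IsSegment.append (hq : IsSegment E x b q) (hr : IsSegment E b y r) (hne : q ++ r ≠ [])
    (h : q ≠ [] → r ≠ [] → endT q ≤ startT r) : IsPath E x y (q ++ r) := by
  rcases hq with ⟨rfl, rfl⟩ | hq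
  · rcases hr with ⟨rfl, rfl⟩ | hr
    exacts [absurd rfl hne, hr]
  · rcases hr with ⟨rfl, rfl⟩ | hr
    exacts [by rwa [List.append_nil], hq.append hr (h hq.1 hr.1)]

lemma IsPath.isSegment_of_beerSplit {p : List (TEdge V)} {t : ℝ} (hp : IsPath E x y p)
    (hs : BeerSplit x b t p q r) : IsSegment E x b q ∧ IsSegment E b y r := by
  obtain ⟨rfl, hb, -, -⟩ := hs
  rcases eq_or_ne q [] with rfl | hq
  · obtain rfl : x = b := hb
    exact ⟨.inl ⟨rfl, rfl⟩, .inr hp⟩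
  rw [List.getLast?_eq_some_getLast hq] at hb
  obtain rfl : (q.getLast hq).dst = b := hb
  refine ⟨.inr (hp.left_of_append hq), ?_⟩
  rcases eq_or_ne r [] with rfl | hr
  · refine .inl ⟨rfl, ?_⟩
    simpa [List.getLast?_eq_some_getLast hq] using hp.2.2.2.1
  · exact .inr (hp.right_of_append hq hr)

end Paths

section NonDominated

variable {E : Set (TEdge V)} {u v x y b : V} {q r : List (TEdge V)}

lemma IsPath.exists_nonDom_le (hE : E.Finite) (hq : IsPath E u v q) :
    ∃ q', NonDom E u v q' ∧ startT q ≤ startT q' ∧ endT q' ≤ endT q := by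
  obtain ⟨q', ⟨hq', hs, he⟩, hmin⟩ := exists_forall_duration_le hE
    (S := {q' | IsPath E u v q' ∧ startT q ≤ startT q' ∧ endT q' ≤ endT q})
    (fun q' h => ⟨h.1.1, h.1.2.1⟩) ⟨q, hq, le_rfl, le_rfl⟩
  refine ⟨q', ⟨hq', fun ⟨p, hp, hps, hpe, hlt⟩ => ?_⟩, hs, he⟩
  have := hmin p ⟨hp, hs.trans hps, hpe.trans he⟩
  rcases hlt with h | h <;> linarith

lemma IsSegment.exists_nonDom_le (hE : E.Finite) (hq : IsSegment E u v q) :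
    ∃ q', IsSegment E u v q' ∧ (q' = [] ↔ q = []) ∧ (q' ≠ [] → NonDom E u v q') ∧
      startT q ≤ startT q' ∧ endT q' ≤ endT q := by
  rcases hq with ⟨rfl, rfl⟩ | hq
  · exact ⟨[], .inl ⟨rfl, rfl⟩, Iff.rfl, fun h => absurd rfl h, le_rfl, le_rfl⟩
  · obtain ⟨q', hq', hs, he⟩ := hq.exists_nonDom_le hE
    exact ⟨q', .inr hq'.1, by simp [hq.1, hq'.1.1], fun _ => hq', hs, he⟩

lemma IsPath.exists_beerSplit_nonDom_le (hE : E.Finite) {p : List (TEdge V)} {t : ℝ}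
    (hp : IsPath E x y p) (hs : BeerSplit x b t p q r) :
    ∃ q' r', IsPath E x y (q' ++ r') ∧ BeerSplit x b t (q' ++ r') q' r' ∧
      (q' ≠ [] → NonDom E x b q') ∧ (r' ≠ [] → NonDom E b y r') ∧
      startT p ≤ startT (q' ++ r') ∧ endT (q' ++ r') ≤ endT p := by
  obtain ⟨hqseg, hrseg⟩ := hp.isSegment_of_beerSplit hs
  obtain ⟨rfl, -, hqt, hrt⟩ := hs
  obtain ⟨q', hq', hq'0, hq'nd, hq's, hq'e⟩ := hqseg.exists_nonDom_le hE
  obtain ⟨r', hr', hr'0, hr'nd, hr's, hr'e⟩ := hrseg.exists_nonDom_le hE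
  rw [forall_mem_getLast?_le_iff] at hqt
  rw [forall_mem_head?_le_iff] at hrt
  have hq't : q' ≠ [] → endT q' ≤ t := fun h => hq'e.trans (hqt (mt hq'0.2 h))
  have hr't : r' ≠ [] → t ≤ startT r' := fun h => (hrt (mt hr'0.2 h)).trans hr's
  have hne : q' ++ r' ≠ [] := by simpa [hq'0, hr'0] using hp.1
  refine ⟨q', r', hq'.append hr' hne fun h h' => (hq't h).trans (hr't h'),
    ⟨rfl, hq'.getD_getLast?_dst, forall_mem_getLast?_le_iff.2 hq't,
      forall_mem_head?_le_iff.2 hr't⟩, hq'nd, hr'nd,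
    startT_append_le_startT_append hq'0 hq's hr's, endT_append_le_endT_append hr'0 hq'e hr'e⟩

end NonDominated

/-- If there is a temporal beer path from `x` to `y` within `[tα, tω]`, then
there is a fastest temporal beer path within `[tα, tω]` through some active
beer vertex `b` at a time `t ∈ T b`, whose `x`-`b` and `b`-`y` subpaths are
non-dominated temporal paths. -/
theorem stmt3 (E : Set (TEdge V)) (hE : E.Finite) (B : Set V) (T : V → Set ℝ)
    (x y : V) (tα tω : ℝ)
    (hex : ∃ p, IsBeerPath E B T x y p ∧ InWin tα tω p) :
    ∃ p, IsBeerPath E B T x y p ∧ InWin tα tω p ∧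
      (∀ p', IsBeerPath E B T x y p' → InWin tα tω p' →
        endT p - startT p ≤ endT p' - startT p') ∧
      ∃ b ∈ B, ∃ t ∈ T b, ∃ q r, BeerSplit x b t p q r ∧
        (q ≠ [] → NonDom E x b q) ∧ (r ≠ [] → NonDom E b y r) := by
  obtain ⟨p, ⟨⟨hp, b, hb, t, ht, q, r, hs⟩, hwin⟩, hfast⟩ := exists_forall_duration_le hE
    (S := {p | IsBeerPath E B T x y p ∧ InWin tα tω p}) (fun p h => ⟨h.1.1.1, h.1.1.2.1⟩) hex
  obtain ⟨q', r', hp', hs', hq', hr', hstart, hend⟩ := hp.exists_beerSplit_nonDom_le hE hs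
  refine ⟨q' ++ r', ⟨hp', b, hb, t, ht, q', r', hs'⟩, ⟨hwin.1.trans hstart, hend.trans hwin.2⟩,
    fun p'' hp'' hwin'' => ?_, b, hb, t, ht, q', r', hs', hq', hr'⟩
  linarith [hfast p'' ⟨hp'', hwin''⟩]
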